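/- Let G be an ample Hausdorff groupoid with compact unit space such that G ≠ Iso(G) and G has at least 3 non-unit elements (|G \ G^{(0)}| ≥ 3). Then the natural representation π: ℂF(G) → A(G) sending δ_U to 1_U is not injective. -/
import Mathlib


open scoped Classical

/-- A groupoid encoded as a "groupoid with zero": the partially defined composition is
totalised by declaring non-composable products to be `0`.  The actual groupoid elements are
the nonzero elements; the range and source of a nonzero `a` are `a * a⁻¹` and `a⁻¹ * a`. -/
class GroupoidZ (G : Type*) extends Mul G, Inv G, Zero G where
  zero_mul' : ∀ a : G, 0 * a = 0
  mul_zero' : ∀ a : G, a * 0 = 0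
  inv_zero' : (0 : G)⁻¹ = 0
  inv_inv' : ∀ a : G, a⁻¹⁻¹ = a
  mul_assoc' : ∀ a b c : G, a * b ≠ 0 → b * c ≠ 0 → a * b * c = a * (b * c)
  mul_ne_zero_iff' : ∀ a b : G, a ≠ 0 → b ≠ 0 → (a * b ≠ 0 ↔ a⁻¹ * a = b * b⁻¹)
  mul_inv_self_mul' : ∀ a : G, a * a⁻¹ * a = a
  mul_inv_rev' : ∀ a b : G, (a * b)⁻¹ = b⁻¹ * a⁻¹

/-- The unit space `G⁰`: the nonzero idempotents. -/
def unitSpace (G : Type*) [GroupoidZ G] : Set G := {e | e ≠ 0 ∧ e * e = e}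

/-- A bisection: a set of groupoid elements on which range and source are injective. -/
def IsBisection {G : Type*} [GroupoidZ G] (B : Set G) : Prop :=
  (0 : G) ∉ B ∧ (∀ a ∈ B, ∀ b ∈ B, a * a⁻¹ = b * b⁻¹ → a = b) ∧
    (∀ a ∈ B, ∀ b ∈ B, a⁻¹ * a = b⁻¹ * b → a = b)

/-- A set is full if its range and source images are the whole unit space. -/
def IsFull {G : Type*} [GroupoidZ G] (B : Set G) : Prop :=
  (fun a => a * a⁻¹) '' B = unitSpace G ∧ (fun a => a⁻¹ * a) '' B = unitSpace G

/-- Compact open bisection. -/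
def IsCOB {G : Type*} [GroupoidZ G] [TopologicalSpace G] (B : Set G) : Prop :=
  IsBisection B ∧ IsCompact B ∧ IsOpen B

/-- The product `AB = {αβ : (α,β) composable}` of two subsets of a groupoid. -/
def setMul {G : Type*} [GroupoidZ G] (A B : Set G) : Set G := Set.image2 (· * ·) A B \ {0}

/-- The inverse `B⁻¹ = {γ⁻¹ : γ ∈ B}` of a subset of a groupoid. -/
def setInv {G : Type*} [GroupoidZ G] (B : Set G) : Set G := Inv.inv '' B

/-- The topological full group `F(G)`: all full compact open bisections. -/
def fullBisections (G : Type*) [GroupoidZ G] [TopologicalSpace G] : Set (Set G) :=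
  {B | IsCOB B ∧ IsFull B}

/-- Indicator function `1_B : G → ℂ`. -/
noncomputable def indic {G : Type*} [GroupoidZ G] (B : Set G) : G → ℂ := Set.indicator B 1

/-- Convolution product on functions `G → ℂ`: `(f * g)(γ) = ∑_{αβ = γ} f(α) g(β)`. -/
noncomputable def convol {G : Type*} [GroupoidZ G] (f g : G → ℂ) : G → ℂ := fun γ =>
  if γ = 0 then 0 else ∑ᶠ p ∈ {p : G × G | p.1 * p.2 = γ}, f p.1 * g p.2

/-- The `*`-involution `f^*(γ) = conj (f (γ⁻¹))`. -/
noncomputable def starF {G : Type*} [GroupoidZ G] (f : G → ℂ) : G → ℂ := fun γ =>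
  (starRingEnd ℂ) (f γ⁻¹)

/-- An ample Hausdorff (étale) groupoid: Hausdorff, locally compact, continuous inversion
and (partial) multiplication, the unit space is open and closed, the range map is open,
and there is a basis of compact open bisections.  The adjoined `0` is an isolated point. -/
class AmpleGroupoid (G : Type*) [TopologicalSpace G] extends GroupoidZ G where
  t2' : T2Space G
  locallyCompact' : LocallyCompactSpace G
  isolated_zero' : IsOpen {(0 : G)}
  continuous_inv' : Continuous (fun a : G => a⁻¹)
  continuousOn_mul' : ContinuousOn (fun p : G × G => p.1 * p.2) {p : G × G | p.1 * p.2 ≠ 0}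
  isOpen_unitSpace' : IsOpen (unitSpace G)
  isClosed_unitSpace' : IsClosed (unitSpace G)
  isOpenMap_range' : ∀ B : Set G, IsOpen B → (0 : G) ∉ B → IsOpen ((fun a => a * a⁻¹) '' B)
  ample_basis' : ∀ (a : G) (U : Set G), a ≠ 0 → IsOpen U → a ∈ U →
    ∃ B : Set G, IsCOB B ∧ a ∈ B ∧ B ⊆ U

/-- The image `π(ℂF(G))` of the representation of the topological full group: the span of
the indicator functions of full compact open bisections. -/
noncomputable def spanFull (G : Type*) [GroupoidZ G] [TopologicalSpace G] :
    Submodule ℂ (G → ℂ) :=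
  Submodule.span ℂ {f | ∃ B ∈ fullBisections G, f = indic B}

/-- The Steinberg algebra `A(G)` (as a subspace of `G → ℂ`): the span of the indicator
functions of compact open bisections. -/
noncomputable def steinberg (G : Type*) [GroupoidZ G] [TopologicalSpace G] :
    Submodule ℂ (G → ℂ) :=
  Submodule.span ℂ {f | ∃ B : Set G, IsCOB B ∧ f = indic B}

section Basics

variable {G : Type*} [GroupoidZ G]

open GroupoidZ

lemma gz_inv_ne_zero {a : G} (ha : a ≠ 0) : a⁻¹ ≠ 0 := by
  intro h
  apply ha
  have := congrArg (·⁻¹) h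
  simpa [GroupoidZ.inv_inv', GroupoidZ.inv_zero'] using this

lemma gz_r_ne_zero {a : G} (ha : a ≠ 0) : a * a⁻¹ ≠ 0 := by
  intro h
  apply ha
  have := GroupoidZ.mul_inv_self_mul' a
  rw [h, GroupoidZ.zero_mul'] at this
  exact this.symm

lemma gz_s_ne_zero {a : G} (ha : a ≠ 0) : a⁻¹ * a ≠ 0 := by
  have := gz_r_ne_zero (gz_inv_ne_zero ha)
  rwa [GroupoidZ.inv_inv'] at this

lemma gz_mul_s_self {a : G} : a * (a⁻¹ * a) = a := by
  by_cases ha : a = 0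
  · subst ha; rw [GroupoidZ.zero_mul']
  · rw [← GroupoidZ.mul_assoc' a a⁻¹ a (gz_r_ne_zero ha) (gz_s_ne_zero ha)]
    exact GroupoidZ.mul_inv_self_mul' a

lemma gz_s_mul_self {a : G} : (a⁻¹ * a) * a⁻¹ = a⁻¹ := by
  have := GroupoidZ.mul_inv_self_mul' a⁻¹
  rwa [GroupoidZ.inv_inv'] at this

lemma gz_s_mem_unit {a : G} (ha : a ≠ 0) : a⁻¹ * a ∈ unitSpace G := by
  refine ⟨gz_s_ne_zero ha, ?_⟩
  have h1 : a * (a⁻¹ * a) ≠ 0 := by rw [gz_mul_s_self]; exact ha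
  rw [GroupoidZ.mul_assoc' a⁻¹ a (a⁻¹ * a) (gz_s_ne_zero ha) h1, gz_mul_s_self]

lemma gz_r_mem_unit {a : G} (ha : a ≠ 0) : a * a⁻¹ ∈ unitSpace G := by
  have := gz_s_mem_unit (gz_inv_ne_zero ha)
  rwa [GroupoidZ.inv_inv'] at this

lemma gz_unit_r_eq {e : G} (he : e ∈ unitSpace G) : e * e⁻¹ = e := by
  obtain ⟨hne, hid⟩ := he
  -- e⁻¹e = e e⁻¹
  have hee : e * e ≠ 0 := by rw [hid]; exact hne
  have hcomm : e⁻¹ * e = e * e⁻¹ := (GroupoidZ.mul_ne_zero_iff' e e hne hne).1 hee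
  -- (e e⁻¹) e = e
  have h1 : e * e⁻¹ * e = e := GroupoidZ.mul_inv_self_mul' e
  -- (e⁻¹ e) e = e⁻¹ e
  have h2 : (e⁻¹ * e) * e = e⁻¹ * e := by
    rw [GroupoidZ.mul_assoc' e⁻¹ e e (gz_s_ne_zero hne) hee, hid]
  rw [hcomm] at h2
  -- h1 : (e e⁻¹) e = e, h2 : (e e⁻¹) e = e e⁻¹
  rw [h1] at h2
  exact h2.symm

lemma gz_unit_inv {e : G} (he : e ∈ unitSpace G) : e⁻¹ = e := by
  have h1 := gz_unit_r_eq he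
  have h2 : (e⁻¹ * e) * e⁻¹ = e⁻¹ := gz_s_mul_self
  have hcomm : e⁻¹ * e = e * e⁻¹ := by
    exact (GroupoidZ.mul_ne_zero_iff' e e he.1 he.1).1 (by rw [he.2]; exact he.1)
  rw [hcomm, h1] at h2
  -- h2 : e * e⁻¹ = e⁻¹
  rw [h1] at h2
  exact h2.symm

lemma gz_unit_s_eq {e : G} (he : e ∈ unitSpace G) : e⁻¹ * e = e := by
  rw [gz_unit_inv he]; exact he.2

lemma gz_not_unit_of_r_ne_s {a : G} (h : a * a⁻¹ ≠ a⁻¹ * a) : a ∉ unitSpace G := by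
  intro he
  exact h (by rw [gz_unit_r_eq he, gz_unit_s_eq he])

lemma gz_mul_ne_zero {a b : G} (ha : a ≠ 0) (hb : b ≠ 0) (h : a⁻¹ * a = b * b⁻¹) :
    a * b ≠ 0 := (GroupoidZ.mul_ne_zero_iff' a b ha hb).2 h

lemma gz_r_mul {a b : G} (ha : a ≠ 0) (hb : b ≠ 0) (hab : a * b ≠ 0) :
    (a * b) * (a * b)⁻¹ = a * a⁻¹ := by
  have hcomp : a⁻¹ * a = b * b⁻¹ := (GroupoidZ.mul_ne_zero_iff' a b ha hb).1 hab
  rw [GroupoidZ.mul_inv_rev']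
  have h1 : (a * b) * b⁻¹ = a := by
    rw [GroupoidZ.mul_assoc' a b b⁻¹ hab (gz_r_ne_zero hb), ← hcomp, gz_mul_s_self]
  have hinv : b⁻¹ * a⁻¹ ≠ 0 := by
    rw [← GroupoidZ.mul_inv_rev']; exact gz_inv_ne_zero hab
  have h2 : (a * b) * b⁻¹ ≠ 0 := by rw [h1]; exact ha
  rw [← GroupoidZ.mul_assoc' (a*b) b⁻¹ a⁻¹ h2 hinv, h1]

lemma gz_s_mul {a b : G} (ha : a ≠ 0) (hb : b ≠ 0) (hab : a * b ≠ 0) :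
    (a * b)⁻¹ * (a * b) = b⁻¹ * b := by
  have hinv : b⁻¹ * a⁻¹ ≠ 0 := by
    rw [← GroupoidZ.mul_inv_rev']; exact gz_inv_ne_zero hab
  have h := gz_r_mul (gz_inv_ne_zero hb) (gz_inv_ne_zero ha) hinv
  rw [GroupoidZ.inv_inv'] at h
  calc (a * b)⁻¹ * (a * b) = (b⁻¹ * a⁻¹) * (b⁻¹ * a⁻¹)⁻¹ := by
        rw [GroupoidZ.mul_inv_rev' a b]
        congr 1
        rw [GroupoidZ.mul_inv_rev' b⁻¹ a⁻¹, GroupoidZ.inv_inv', GroupoidZ.inv_inv']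
    _ = b⁻¹ * b := by rw [h]

end Basics
section Topol

variable {G : Type*} [TopologicalSpace G] [AmpleGroupoid G]

instance (priority := 100) ampleT2 : T2Space G := AmpleGroupoid.t2'

/-- Range image of a set. -/
def rimg (C : Set G) : Set G := (fun a => a * a⁻¹) '' C
/-- Source image of a set. -/
def simg (C : Set G) : Set G := (fun a => a⁻¹ * a) '' C

lemma rimg_union (A B : Set G) : rimg (A ∪ B) = rimg A ∪ rimg B := Set.image_union _ _ _
lemma simg_union (A B : Set G) : simg (A ∪ B) = simg A ∪ simg B := Set.image_union _ _ _
lemma rimg_singleton (a : G) : rimg {a} = {a * a⁻¹} := Set.image_singleton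
lemma simg_singleton (a : G) : simg {a} = {a⁻¹ * a} := Set.image_singleton
@[simp] lemma rimg_empty : rimg (∅ : Set G) = ∅ := Set.image_empty _
@[simp] lemma simg_empty : simg (∅ : Set G) = ∅ := Set.image_empty _

lemma mem_setInv {a : G} {B : Set G} : a ∈ setInv B ↔ a⁻¹ ∈ B := by
  constructor
  · rintro ⟨b, hb, rfl⟩; rwa [GroupoidZ.inv_inv']
  · intro h; exact ⟨a⁻¹, h, GroupoidZ.inv_inv' a⟩

lemma rimg_setInv (B : Set G) : rimg (setInv B) = simg B := by
  ext u
  constructor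
  · rintro ⟨x, hx, rfl⟩
    rcases hx with ⟨b, hb, rfl⟩
    exact ⟨b, hb, by show b⁻¹ * b = b⁻¹ * b⁻¹⁻¹; rw [GroupoidZ.inv_inv']⟩
  · rintro ⟨b, hb, rfl⟩
    exact ⟨b⁻¹, ⟨b, hb, rfl⟩, by show b⁻¹ * b⁻¹⁻¹ = b⁻¹ * b; rw [GroupoidZ.inv_inv']⟩

lemma simg_setInv (B : Set G) : simg (setInv B) = rimg B := by
  ext u
  constructor
  · rintro ⟨x, hx, rfl⟩
    rcases hx with ⟨b, hb, rfl⟩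
    exact ⟨b, hb, by show b * b⁻¹ = b⁻¹⁻¹ * b⁻¹; rw [GroupoidZ.inv_inv']⟩
  · rintro ⟨b, hb, rfl⟩
    exact ⟨b⁻¹, ⟨b, hb, rfl⟩, by show b⁻¹⁻¹ * b⁻¹ = b * b⁻¹; rw [GroupoidZ.inv_inv']⟩

lemma setInv_singleton (a : G) : setInv ({a} : Set G) = {a⁻¹} := Set.image_singleton

lemma isOpen_ne_zero : IsOpen {a : G | a ≠ 0} := by
  have : ({a : G | a ≠ 0}) = ({(0:G)})ᶜ := by ext a; simp
  rw [this]
  exact isClosed_singleton.isOpen_compl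

lemma gz_continuous_inv : Continuous (fun a : G => a⁻¹) := AmpleGroupoid.continuous_inv'

lemma isOpen_setInv {B : Set G} (hB : IsOpen B) : IsOpen (setInv B) := by
  have : setInv B = (fun a : G => a⁻¹) ⁻¹' B := by
    ext a; simp [setInv, mem_setInv, Set.mem_preimage]
    constructor
    · rintro ⟨b, hb, rfl⟩; rwa [GroupoidZ.inv_inv']
    · intro h; exact ⟨a⁻¹, h, GroupoidZ.inv_inv' a⟩
  rw [this]
  exact hB.preimage gz_continuous_inv

lemma isCompact_setInv {B : Set G} (hB : IsCompact B) : IsCompact (setInv B) :=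
  hB.image gz_continuous_inv

lemma continuousOn_r : ContinuousOn (fun a : G => a * a⁻¹) {a : G | a ≠ 0} := by
  have h1 : Continuous (fun a : G => (a, a⁻¹)) := continuous_id.prodMk gz_continuous_inv
  have h2 := AmpleGroupoid.continuousOn_mul' (G := G)
  refine h2.comp h1.continuousOn ?_
  intro a ha
  exact gz_r_ne_zero ha

lemma continuousOn_s : ContinuousOn (fun a : G => a⁻¹ * a) {a : G | a ≠ 0} := by
  have h1 : Continuous (fun a : G => (a⁻¹, a)) := gz_continuous_inv.prodMk continuous_id
  have h2 := AmpleGroupoid.continuousOn_mul' (G := G)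
  refine h2.comp h1.continuousOn ?_
  intro a ha
  exact gz_s_ne_zero ha

lemma isOpen_r_preimage {V : Set G} (hV : IsOpen V) :
    IsOpen ({a : G | a ≠ 0} ∩ (fun a => a * a⁻¹) ⁻¹' V) :=
  continuousOn_r.isOpen_inter_preimage isOpen_ne_zero hV

lemma isOpen_s_preimage {V : Set G} (hV : IsOpen V) :
    IsOpen ({a : G | a ≠ 0} ∩ (fun a => a⁻¹ * a) ⁻¹' V) :=
  continuousOn_s.isOpen_inter_preimage isOpen_ne_zero hV

lemma isOpen_rimg {B : Set G} (hB : IsOpen B) (h0 : (0:G) ∉ B) : IsOpen (rimg B) :=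
  AmpleGroupoid.isOpenMap_range' B hB h0

lemma isOpen_simg {B : Set G} (hB : IsOpen B) (h0 : (0:G) ∉ B) : IsOpen (simg B) := by
  rw [← rimg_setInv]
  exact isOpen_rimg (isOpen_setInv hB) (by
    intro h; rw [mem_setInv, GroupoidZ.inv_zero'] at h; exact h0 h)

lemma isCompact_rimg {B : Set G} (hB : IsCompact B) (h0 : (0:G) ∉ B) :
    IsCompact (rimg B) := by
  refine hB.image_of_continuousOn (continuousOn_r.mono ?_)
  intro a ha h
  subst h
  exact h0 ha

lemma isCompact_simg {B : Set G} (hB : IsCompact B) (h0 : (0:G) ∉ B) :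
    IsCompact (simg B) := by
  rw [← rimg_setInv]
  exact isCompact_rimg (isCompact_setInv hB) (by
    intro h; rw [mem_setInv, GroupoidZ.inv_zero'] at h; exact h0 h)

lemma cob_nhds {a : G} (ha : a ≠ 0) {O V W : Set G} (hO : IsOpen O) (haO : a ∈ O)
    (hV : IsOpen V) (haV : a * a⁻¹ ∈ V) (hW : IsOpen W) (haW : a⁻¹ * a ∈ W) :
    ∃ B : Set G, IsCOB B ∧ a ∈ B ∧ B ⊆ O ∧ rimg B ⊆ V ∧ simg B ⊆ W := by
  set U := O ∩ (({a : G | a ≠ 0} ∩ (fun a => a * a⁻¹) ⁻¹' V) ∩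
      ({a : G | a ≠ 0} ∩ (fun a => a⁻¹ * a) ⁻¹' W)) with hU
  have hUopen : IsOpen U := hO.inter ((isOpen_r_preimage hV).inter (isOpen_s_preimage hW))
  have haU : a ∈ U := ⟨haO, ⟨⟨ha, haV⟩, ⟨ha, haW⟩⟩⟩
  obtain ⟨B, hB, haB, hBU⟩ := AmpleGroupoid.ample_basis' a U ha hUopen haU
  refine ⟨B, hB, haB, fun x hx => (hBU hx).1, ?_, ?_⟩
  · rintro u ⟨x, hx, rfl⟩
    exact (hBU hx).2.1.2
  · rintro u ⟨x, hx, rfl⟩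
    exact (hBU hx).2.2.2

lemma exists_cob {a : G} (ha : a ≠ 0) : ∃ B : Set G, IsCOB B ∧ a ∈ B :=
  (AmpleGroupoid.ample_basis' a Set.univ ha isOpen_univ (Set.mem_univ a)).imp
    fun B hB => ⟨hB.1, hB.2.1⟩

lemma isolated_of_cob {B : Set G} {x : G} (hB : IsCOB B) (hx : x ∈ B)
    (hu : IsOpen ({x * x⁻¹} : Set G)) : IsOpen ({x} : Set G) := by
  have hxne : x ≠ 0 := fun h => hB.1.1 (h ▸ hx)
  have heq : ({x} : Set G) = B ∩ ({a : G | a ≠ 0} ∩ (fun a => a * a⁻¹) ⁻¹' {x * x⁻¹}) := by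
    ext y
    constructor
    · rintro rfl
      exact ⟨hx, hxne, rfl⟩
    · rintro ⟨hyB, hyne, hy⟩
      exact hB.1.2.1 y hyB x hx hy
  rw [heq]
  exact hB.2.2.inter (isOpen_r_preimage hu)

end Topol
section Frame

variable {G : Type*} [TopologicalSpace G] [AmpleGroupoid G]

lemma rimg_subset_unit {C : Set G} (h0 : (0:G) ∉ C) : rimg C ⊆ unitSpace G := by
  rintro u ⟨a, ha, rfl⟩
  exact gz_r_mem_unit (fun h => h0 (h ▸ ha))

lemma simg_subset_unit {C : Set G} (h0 : (0:G) ∉ C) : simg C ⊆ unitSpace G := by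
  rintro u ⟨a, ha, rfl⟩
  exact gz_s_mem_unit (fun h => h0 (h ▸ ha))

lemma isBisection_subset {A B : Set G} (hB : IsBisection B) (hAB : A ⊆ B) :
    IsBisection A :=
  ⟨fun h => hB.1 (hAB h), fun a ha b hb h => hB.2.1 a (hAB ha) b (hAB hb) h,
    fun a ha b hb h => hB.2.2 a (hAB ha) b (hAB hb) h⟩

lemma isBisection_union {C D : Set G} (hC : IsBisection C) (hD : IsBisection D)
    (hr : rimg C ∩ rimg D = ∅) (hs : simg C ∩ simg D = ∅) : IsBisection (C ∪ D) := by
  refine ⟨fun h => h.elim hC.1 hD.1, ?_, ?_⟩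
  · rintro a (ha | ha) b (hb | hb) h
    · exact hC.2.1 a ha b hb h
    · exact absurd (⟨⟨a, ha, h⟩, ⟨b, hb, rfl⟩⟩ : b * b⁻¹ ∈ rimg C ∩ rimg D)
        (by intro hm; rw [Set.eq_empty_iff_forall_notMem] at hr; exact hr _ ⟨hm.1, hm.2⟩)
    · exact absurd (⟨⟨b, hb, h.symm⟩, ⟨a, ha, rfl⟩⟩ : a * a⁻¹ ∈ rimg C ∩ rimg D)
        (by intro hm; rw [Set.eq_empty_iff_forall_notMem] at hr; exact hr _ ⟨hm.1, hm.2⟩)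
    · exact hD.2.1 a ha b hb h
  · rintro a (ha | ha) b (hb | hb) h
    · exact hC.2.2 a ha b hb h
    · exact absurd (⟨⟨a, ha, h⟩, ⟨b, hb, rfl⟩⟩ : b⁻¹ * b ∈ simg C ∩ simg D)
        (by intro hm; rw [Set.eq_empty_iff_forall_notMem] at hs; exact hs _ ⟨hm.1, hm.2⟩)
    · exact absurd (⟨⟨b, hb, h.symm⟩, ⟨a, ha, rfl⟩⟩ : a⁻¹ * a ∈ simg C ∩ simg D)
        (by intro hm; rw [Set.eq_empty_iff_forall_notMem] at hs; exact hs _ ⟨hm.1, hm.2⟩)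
    · exact hD.2.2 a ha b hb h

lemma isBisection_setInv {B : Set G} (hB : IsBisection B) : IsBisection (setInv B) := by
  refine ⟨?_, ?_, ?_⟩
  · intro h
    rw [mem_setInv, GroupoidZ.inv_zero'] at h
    exact hB.1 h
  · intro a ha b hb h
    rw [mem_setInv] at ha hb
    have : a⁻¹ = b⁻¹ := by
      apply hB.2.2 a⁻¹ ha b⁻¹ hb
      rwa [GroupoidZ.inv_inv', GroupoidZ.inv_inv']
    calc a = a⁻¹⁻¹ := (GroupoidZ.inv_inv' a).symm
      _ = b⁻¹⁻¹ := by rw [this]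
      _ = b := GroupoidZ.inv_inv' b
  · intro a ha b hb h
    rw [mem_setInv] at ha hb
    have : a⁻¹ = b⁻¹ := by
      apply hB.2.1 a⁻¹ ha b⁻¹ hb
      rwa [GroupoidZ.inv_inv', GroupoidZ.inv_inv']
    calc a = a⁻¹⁻¹ := (GroupoidZ.inv_inv' a).symm
      _ = b⁻¹⁻¹ := by rw [this]
      _ = b := GroupoidZ.inv_inv' b

lemma isCOB_setInv {B : Set G} (hB : IsCOB B) : IsCOB (setInv B) :=
  ⟨isBisection_setInv hB.1, isCompact_setInv hB.2.1, isOpen_setInv hB.2.2⟩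

lemma isCOB_union {C D : Set G} (hC : IsCOB C) (hD : IsCOB D)
    (hr : rimg C ∩ rimg D = ∅) (hs : simg C ∩ simg D = ∅) : IsCOB (C ∪ D) :=
  ⟨isBisection_union hC.1 hD.1 hr hs, hC.2.1.union hD.2.1, hC.2.2.union hD.2.2⟩

lemma isCOB_singleton {a : G} (ha : a ≠ 0) (h : IsOpen ({a} : Set G)) :
    IsCOB ({a} : Set G) := by
  refine ⟨⟨fun hm => ha (Set.mem_singleton_iff.1 hm).symm, ?_, ?_⟩, isCompact_singleton, h⟩
  all_goals rintro x rfl y rfl _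
  all_goals rfl

/-- Completion of a symmetric bisection to a full bisection. -/
def mkF (C : Set G) : Set G := C ∪ (unitSpace G \ rimg C)

lemma mem_mkF_left {C : Set G} {x : G} (h : x ∈ C) : x ∈ mkF C := Or.inl h

lemma mkF_full (hcomp : IsCompact (unitSpace G)) {C : Set G} (hC : IsCOB C)
    (hCG : ∀ x ∈ C, x ∉ unitSpace G) (hsym : rimg C = simg C) :
    mkF C ∈ fullBisections G := by
  have h0 : (0:G) ∉ C := hC.1.1
  have hru : rimg C ⊆ unitSpace G := rimg_subset_unit h0
  have hDdef : unitSpace G \ rimg C = unitSpace G ∩ (rimg C)ᶜ := Set.diff_eq _ _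
  have hropen : IsOpen (rimg C) := isOpen_rimg hC.2.2 h0
  have hrclosed : IsClosed (rimg C) := (isCompact_rimg hC.2.1 h0).isClosed
  have hDopen : IsOpen (unitSpace G \ rimg C) := by
    rw [hDdef]; exact AmpleGroupoid.isOpen_unitSpace'.inter hrclosed.isOpen_compl
  have hDclosed : IsClosed (unitSpace G \ rimg C) := by
    rw [hDdef]; exact AmpleGroupoid.isClosed_unitSpace'.inter hropen.isClosed_compl
  have hDcompact : IsCompact (unitSpace G \ rimg C) :=
    hcomp.of_isClosed_subset hDclosed Set.diff_subset
  refine ⟨⟨⟨?_, ?_, ?_⟩, hC.2.1.union hDcompact, hC.2.2.union hDopen⟩, ?_, ?_⟩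
  · rintro (h | h)
    · exact h0 h
    · exact h.1.1 rfl
  · -- range injective
    rintro a (ha | ha) b (hb | hb) h
    · exact hC.1.2.1 a ha b hb h
    · exact absurd (⟨a, ha, h⟩ : b * b⁻¹ ∈ rimg C)
        (by rw [gz_unit_r_eq hb.1]; exact hb.2)
    · exact absurd (⟨b, hb, h.symm⟩ : a * a⁻¹ ∈ rimg C)
        (by rw [gz_unit_r_eq ha.1]; exact ha.2)
    · rw [gz_unit_r_eq ha.1, gz_unit_r_eq hb.1] at h; exact h
  · -- source injective
    rintro a (ha | ha) b (hb | hb) h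
    · exact hC.1.2.2 a ha b hb h
    · refine absurd (?_ : b⁻¹ * b ∈ rimg C) ?_
      · rw [hsym]; exact ⟨a, ha, h⟩
      · rw [gz_unit_s_eq hb.1]; exact hb.2
    · refine absurd (?_ : a⁻¹ * a ∈ rimg C) ?_
      · rw [hsym]; exact ⟨b, hb, h.symm⟩
      · rw [gz_unit_s_eq ha.1]; exact ha.2
    · rw [gz_unit_s_eq ha.1, gz_unit_s_eq hb.1] at h; exact h
  · -- range full
    rw [show (fun a : G => a * a⁻¹) '' mkF C = rimg (mkF C) from rfl]
    rw [mkF, rimg_union]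
    have hD : rimg (unitSpace G \ rimg C) = unitSpace G \ rimg C := by
      ext u
      constructor
      · rintro ⟨e, he, rfl⟩
        show e * e⁻¹ ∈ _
        rw [gz_unit_r_eq he.1]
        exact he
      · intro hu
        exact ⟨u, hu, gz_unit_r_eq hu.1⟩
    rw [hD]
    rw [Set.union_diff_cancel' (le_refl _) hru]
  · rw [show (fun a : G => a⁻¹ * a) '' mkF C = simg (mkF C) from rfl]
    rw [mkF, simg_union]
    have hD : simg (unitSpace G \ rimg C) = unitSpace G \ rimg C := by
      ext u
      constructor
      · rintro ⟨e, he, rfl⟩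
        show e⁻¹ * e ∈ _
        rw [gz_unit_s_eq he.1]
        exact he
      · intro hu
        exact ⟨u, hu, gz_unit_s_eq hu.1⟩
    rw [hD, ← hsym]
    rw [Set.union_diff_cancel' (le_refl _) hru]

lemma mkF_indic {C : Set G} (h0 : (0:G) ∉ C) (hCG : ∀ x ∈ C, x ∉ unitSpace G) :
    indic (mkF C) = indic C + indic (unitSpace G) - indic (rimg C) := by
  have hru : rimg C ⊆ unitSpace G := rimg_subset_unit h0
  funext x
  simp only [indic, Pi.sub_apply, Pi.add_apply, Set.indicator_apply, Pi.one_apply]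
  by_cases h1 : x ∈ C
  · have h2 : x ∉ unitSpace G := hCG x h1
    have h3 : x ∉ rimg C := fun h => h2 (hru h)
    have hm : x ∈ mkF C := Or.inl h1
    simp [hm, h1, h2, h3]
  · by_cases h2 : x ∈ unitSpace G
    · by_cases h3 : x ∈ rimg C
      · have hm : x ∉ mkF C := by rintro (h | h); exacts [h1 h, h.2 h3]
        simp [hm, h1, h2, h3]
      · have hm : x ∈ mkF C := Or.inr ⟨h2, h3⟩
        simp [hm, h1, h2, h3]
    · have h3 : x ∉ rimg C := fun h => h2 (hru h)
      have hm : x ∉ mkF C := by rintro (h | h); exacts [h1 h, h2 h.1]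
      simp [hm, h1, h2, h3]

lemma key4 {U1 U2 U3 U4 : Set G} (h1 : U1 ∈ fullBisections G) (h2 : U2 ∈ fullBisections G)
    (h3 : U3 ∈ fullBisections G) (h4 : U4 ∈ fullBisections G)
    (d12 : U1 ≠ U2) (d13 : U1 ≠ U3) (d14 : U1 ≠ U4)
    (hsum : indic U1 + indic U2 = indic U3 + indic U4) :
    ¬ LinearIndependent ℂ
      (fun B : {B : Set G // B ∈ fullBisections G} => indic B.1) := by
  intro h
  rw [linearIndependent_iff] at h
  have hz := h (Finsupp.single ⟨U1,h1⟩ 1 + Finsupp.single ⟨U2,h2⟩ 1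
      - Finsupp.single ⟨U3,h3⟩ 1 - Finsupp.single ⟨U4,h4⟩ 1) ?_
  · have := DFunLike.congr_fun hz ⟨U1, h1⟩
    simp only [Finsupp.coe_add, Finsupp.coe_sub, Pi.add_apply, Pi.sub_apply,
      Finsupp.single_apply, Finsupp.coe_zero, Pi.zero_apply, Subtype.mk.injEq] at this
    rw [if_pos trivial, if_neg (Ne.symm d12), if_neg (Ne.symm d13), if_neg (Ne.symm d14)] at this
    norm_num at this
  · rw [map_sub, map_sub, map_add]
    simp only [Finsupp.linearCombination_single, one_smul]
    rw [sub_sub, sub_eq_zero]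
    exact hsum

lemma key6 {U1 U2 U3 V1 V2 V3 : Set G} (h1 : U1 ∈ fullBisections G)
    (h2 : U2 ∈ fullBisections G) (h3 : U3 ∈ fullBisections G)
    (g1 : V1 ∈ fullBisections G) (g2 : V2 ∈ fullBisections G) (g3 : V3 ∈ fullBisections G)
    (d12 : U1 ≠ U2) (d13 : U1 ≠ U3) (e1 : U1 ≠ V1) (e2 : U1 ≠ V2) (e3 : U1 ≠ V3)
    (hsum : indic U1 + indic U2 + indic U3 = indic V1 + indic V2 + indic V3) :
    ¬ LinearIndependent ℂ
      (fun B : {B : Set G // B ∈ fullBisections G} => indic B.1) := by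
  intro h
  rw [linearIndependent_iff] at h
  have hz := h (Finsupp.single ⟨U1,h1⟩ 1 + Finsupp.single ⟨U2,h2⟩ 1
      + Finsupp.single ⟨U3,h3⟩ 1 - Finsupp.single ⟨V1,g1⟩ 1
      - Finsupp.single ⟨V2,g2⟩ 1 - Finsupp.single ⟨V3,g3⟩ 1) ?_
  · have := DFunLike.congr_fun hz ⟨U1, h1⟩
    simp only [Finsupp.coe_add, Finsupp.coe_sub, Pi.add_apply, Pi.sub_apply,
      Finsupp.single_apply, Finsupp.coe_zero, Pi.zero_apply, Subtype.mk.injEq] at this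
    rw [if_pos trivial, if_neg (Ne.symm d12), if_neg (Ne.symm d13), if_neg (Ne.symm e1),
      if_neg (Ne.symm e2), if_neg (Ne.symm e3)] at this
    norm_num at this
  · rw [map_sub, map_sub, map_sub, map_add, map_add]
    simp only [Finsupp.linearCombination_single, one_smul]
    rw [sub_sub, sub_sub, sub_eq_zero]
    rw [hsum, add_assoc]

end Frame
section Masters

variable {G : Type*} [TopologicalSpace G] [AmpleGroupoid G]

lemma indic_union {A B : Set G} (h : ∀ x ∈ A, x ∉ B) :
    indic (A ∪ B) = indic A + indic B := by
  have hd : Disjoint A B := Set.disjoint_left.2 h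
  unfold indic
  rw [Set.indicator_union_of_disjoint hd]
  rfl

@[simp] lemma indic_empty : indic (∅ : Set G) = 0 := by
  unfold indic
  rw [Set.indicator_empty]
  rfl

lemma disj_of_rimg {X Y : Set G} (h : rimg X ∩ rimg Y = ∅) : ∀ x ∈ X, x ∉ Y := by
  intro x hx hy
  rw [Set.eq_empty_iff_forall_notMem] at h
  exact h (x * x⁻¹) ⟨⟨x, hx, rfl⟩, ⟨x, hy, rfl⟩⟩

lemma setInv_no_units {A : Set G} (hA : ∀ x ∈ A, x ∉ unitSpace G) :
    ∀ x ∈ setInv A, x ∉ unitSpace G := by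
  intro x hx hu
  rw [mem_setInv] at hx
  rw [← gz_unit_inv hu] at hu
  exact hA x⁻¹ hx hu

lemma ne_mkF {C D : Set G} {a : G} (haC : a ∈ C) (haD : a ∉ D) (hau : a ∉ unitSpace G) :
    mkF C ≠ mkF D := by
  intro h
  have : a ∈ mkF D := h ▸ Or.inl haC
  rcases this with h' | h'
  · exact haD h'
  · exact hau h'.1

lemma rimg_inter_empty {X Y : Set G} (h : ∀ u, u ∈ rimg X → u ∈ rimg Y → False) :
    rimg X ∩ rimg Y = ∅ := by
  rw [Set.eq_empty_iff_forall_notMem]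
  rintro u ⟨h1, h2⟩
  exact h u h1 h2

/-- Master lemma: two "symmetric" compact open bisections with disjoint unit supports
give a linear dependence. -/
lemma ML3 (hcomp : IsCompact (unitSpace G)) {A B : Set G} (hA : IsCOB A) (hB : IsCOB B)
    (hAG : ∀ x ∈ A, x ∉ unitSpace G) (hBG : ∀ x ∈ B, x ∉ unitSpace G)
    (hsymA : rimg A = simg A) (hsymB : rimg B = simg B)
    (hdisj : rimg A ∩ rimg B = ∅) (hAne : A.Nonempty) (hBne : B.Nonempty) :
    ¬ LinearIndependent ℂ
      (fun W : {W : Set G // W ∈ fullBisections G} => indic W.1) := by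
  obtain ⟨a, ha⟩ := hAne
  obtain ⟨b, hb⟩ := hBne
  have hdisj' : simg A ∩ simg B = ∅ := by rw [← hsymA, ← hsymB]; exact hdisj
  have hABd : ∀ x ∈ A, x ∉ B := disj_of_rimg hdisj
  have hCcob : IsCOB (A ∪ B) := isCOB_union hA hB hdisj hdisj'
  have hCG : ∀ x ∈ A ∪ B, x ∉ unitSpace G := by
    rintro x (hx | hx)
    exacts [hAG x hx, hBG x hx]
  have hsymC : rimg (A ∪ B) = simg (A ∪ B) := by
    rw [rimg_union, simg_union, hsymA, hsymB]
  have hEcob : IsCOB (∅ : Set G) := by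
    refine ⟨⟨Set.notMem_empty 0, ?_, ?_⟩, isCompact_empty, isOpen_empty⟩ <;>
      (rintro x hx; exact absurd hx (Set.notMem_empty x))
  have m1 := mkF_full hcomp hB hBG hsymB
  have m2 := mkF_full hcomp hA hAG hsymA
  have m3 := mkF_full hcomp hCcob hCG hsymC
  have m4 := mkF_full hcomp hEcob (fun x hx => absurd hx (Set.notMem_empty x))
    (by rw [rimg_empty, simg_empty])
  have hanu : a ∉ unitSpace G := hAG a ha
  have hbnu : b ∉ unitSpace G := hBG b hb
  refine key4 m1 m2 m3 m4 ?_ ?_ ?_ ?_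
  · exact ne_mkF hb (fun h => hABd b h hb) hbnu
  · -- mkF B ≠ mkF (A ∪ B) : use witness a on the other side
    intro h
    have : a ∈ mkF B := h ▸ Or.inl (Or.inl ha)
    rcases this with h' | h'
    · exact hABd a ha h'
    · exact hanu h'.1
  · exact ne_mkF hb (Set.notMem_empty b) hbnu
  · -- indicator identity
    rw [mkF_indic hB.1.1 hBG, mkF_indic hA.1.1 hAG, mkF_indic hCcob.1.1 hCG,
      mkF_indic hEcob.1.1 (fun x hx => absurd hx (Set.notMem_empty x)),
      indic_union hABd, rimg_union, indic_union (disj_of_rimg ?_), rimg_empty,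
      indic_empty]
    · abel
    · -- rimg (rimg A) ∩ rimg (rimg B) = ∅ : images of unit sets are themselves
      rw [Set.eq_empty_iff_forall_notMem]
      rintro u ⟨⟨e, he, rfl⟩, ⟨f, hf, hef⟩⟩
      have heu : e ∈ unitSpace G := rimg_subset_unit hA.1.1 he
      have hfu : f ∈ unitSpace G := rimg_subset_unit hB.1.1 hf
      have : e = f := by
        have : f * f⁻¹ = e * e⁻¹ := hef
        rw [gz_unit_r_eq heu, gz_unit_r_eq hfu] at this
        exact this.symm
      subst this
      rw [Set.eq_empty_iff_forall_notMem] at hdisj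
      exact hdisj e ⟨he, hf⟩

/-- Master lemma: two disjoint compact open bisections with the same range and source
supports, ranges disjoint from sources, give a linear dependence. -/
lemma ML1 (hcomp : IsCompact (unitSpace G)) {A B : Set G} (hA : IsCOB A) (hB : IsCOB B)
    (hAG : ∀ x ∈ A, x ∉ unitSpace G) (hBG : ∀ x ∈ B, x ∉ unitSpace G)
    (hrr : rimg A = rimg B) (hss : simg A = simg B)
    (hrs : rimg A ∩ simg A = ∅) (hAB : ∀ x ∈ A, x ∉ B)
    (hAne : A.Nonempty) :
    ¬ LinearIndependent ℂ
      (fun W : {W : Set G // W ∈ fullBisections G} => indic W.1) := by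
  obtain ⟨a, ha⟩ := hAne
  have hrsB : rimg B ∩ simg B = ∅ := by rw [← hrr, ← hss]; exact hrs
  have hrsAB : rimg A ∩ simg B = ∅ := by rw [← hss]; exact hrs
  have hrsBA : rimg B ∩ simg A = ∅ := by rw [← hrr]; exact hrs
  have hsrA : simg A ∩ rimg A = ∅ := by rw [Set.inter_comm]; exact hrs
  -- the four symmetric sets
  have c1 : IsCOB (A ∪ setInv A) := by
    refine isCOB_union hA (isCOB_setInv hA) ?_ ?_
    · rw [rimg_setInv]; exact hrs
    · rw [simg_setInv]; exact hsrA
  have c2 : IsCOB (B ∪ setInv B) := by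
    refine isCOB_union hB (isCOB_setInv hB) ?_ ?_
    · rw [rimg_setInv]; exact hrsB
    · rw [simg_setInv, Set.inter_comm]; exact hrsB
  have c3 : IsCOB (A ∪ setInv B) := by
    refine isCOB_union hA (isCOB_setInv hB) ?_ ?_
    · rw [rimg_setInv]; exact hrsAB
    · rw [simg_setInv, Set.inter_comm]; exact hrsBA
  have c4 : IsCOB (B ∪ setInv A) := by
    refine isCOB_union hB (isCOB_setInv hA) ?_ ?_
    · rw [rimg_setInv]; exact hrsBA
    · rw [simg_setInv, Set.inter_comm]; exact hrsAB
  have g1 : ∀ x ∈ A ∪ setInv A, x ∉ unitSpace G := by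
    rintro x (hx | hx); exacts [hAG x hx, setInv_no_units hAG x hx]
  have g2 : ∀ x ∈ B ∪ setInv B, x ∉ unitSpace G := by
    rintro x (hx | hx); exacts [hBG x hx, setInv_no_units hBG x hx]
  have g3 : ∀ x ∈ A ∪ setInv B, x ∉ unitSpace G := by
    rintro x (hx | hx); exacts [hAG x hx, setInv_no_units hBG x hx]
  have g4 : ∀ x ∈ B ∪ setInv A, x ∉ unitSpace G := by
    rintro x (hx | hx); exacts [hBG x hx, setInv_no_units hAG x hx]
  have s1 : rimg (A ∪ setInv A) = simg (A ∪ setInv A) := by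
    rw [rimg_union, simg_union, rimg_setInv, simg_setInv, Set.union_comm]
  have s2 : rimg (B ∪ setInv B) = simg (B ∪ setInv B) := by
    rw [rimg_union, simg_union, rimg_setInv, simg_setInv, Set.union_comm]
  have s3 : rimg (A ∪ setInv B) = simg (A ∪ setInv B) := by
    rw [rimg_union, simg_union, rimg_setInv, simg_setInv, hss, hrr, Set.union_comm]
  have s4 : rimg (B ∪ setInv A) = simg (B ∪ setInv A) := by
    rw [rimg_union, simg_union, rimg_setInv, simg_setInv, hss, hrr, Set.union_comm]
  have m1 := mkF_full hcomp c1 g1 s1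
  have m2 := mkF_full hcomp c2 g2 s2
  have m3 := mkF_full hcomp c3 g3 s3
  have m4 := mkF_full hcomp c4 g4 s4
  have hanu : a ∉ unitSpace G := hAG a ha
  -- disjointness facts between pieces
  have dAiA : ∀ x ∈ A, x ∉ setInv A := disj_of_rimg (by rw [rimg_setInv]; exact hrs)
  have dAiB : ∀ x ∈ A, x ∉ setInv B := disj_of_rimg (by rw [rimg_setInv]; exact hrsAB)
  have dBiA : ∀ x ∈ B, x ∉ setInv A := disj_of_rimg (by rw [rimg_setInv]; exact hrsBA)
  have dBiB : ∀ x ∈ B, x ∉ setInv B := disj_of_rimg (by rw [rimg_setInv]; exact hrsB)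
  refine key4 m1 m2 m3 m4 ?_ ?_ ?_ ?_
  · -- mkF C1 ≠ mkF C2 via a
    refine ne_mkF (Or.inl ha) ?_ hanu
    rintro (h | h)
    exacts [hAB a ha h, dAiB a ha h]
  · -- mkF C1 ≠ mkF C3 via a⁻¹
    have haiA : a⁻¹ ∈ setInv A := ⟨a, ha, rfl⟩
    refine ne_mkF (Or.inr haiA) ?_ (setInv_no_units hAG a⁻¹ haiA)
    rintro (h | h)
    · exact dAiA a⁻¹ h haiA
    · rw [mem_setInv, GroupoidZ.inv_inv'] at h
      exact hAB a ha h
  · -- mkF C1 ≠ mkF C4 via a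
    refine ne_mkF (Or.inl ha) ?_ hanu
    rintro (h | h)
    exacts [hAB a ha h, dAiA a ha h]
  · -- indicator identity
    rw [mkF_indic c1.1.1 g1, mkF_indic c2.1.1 g2, mkF_indic c3.1.1 g3, mkF_indic c4.1.1 g4,
      indic_union dAiA, indic_union dBiB, indic_union dAiB, indic_union dBiA,
      rimg_union, rimg_union, rimg_union, rimg_union,
      rimg_setInv, rimg_setInv, hrr, hss]
    abel

end Masters
section S3sec

variable {G : Type*} [TopologicalSpace G] [AmpleGroupoid G]

lemma gz_ne_of_r {a b u v : G} (ha : a * a⁻¹ = u) (hb : b * b⁻¹ = v) (h : u ≠ v) :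
    a ≠ b := fun e => h (by rw [← ha, ← hb, e])

lemma gz_ne_of_s {a b u v : G} (ha : a⁻¹ * a = u) (hb : b⁻¹ * b = v) (h : u ≠ v) :
    a ≠ b := fun e => h (by rw [← ha, ← hb, e])

/-- The symmetric-group relation: three isolated arrows forming a triangle over three
distinct units give a linear dependence. -/
lemma S3rel (hcomp : IsCompact (unitSpace G)) {x y z u1 u2 u3 : G}
    (hx : x ≠ 0) (hy : y ≠ 0) (hz : z ≠ 0)
    (hrx : x * x⁻¹ = u1) (hsx : x⁻¹ * x = u2)
    (hry : y * y⁻¹ = u2) (hsy : y⁻¹ * y = u3)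
    (hrz : z * z⁻¹ = u1) (hsz : z⁻¹ * z = u3)
    (h12 : u1 ≠ u2) (h13 : u1 ≠ u3) (h23 : u2 ≠ u3)
    (hox : IsOpen ({x} : Set G)) (hoy : IsOpen ({y} : Set G))
    (hoz : IsOpen ({z} : Set G)) :
    ¬ LinearIndependent ℂ
      (fun W : {W : Set G // W ∈ fullBisections G} => indic W.1) := by
  -- data for inverses
  have hx' : x⁻¹ ≠ 0 := gz_inv_ne_zero hx
  have hy' : y⁻¹ ≠ 0 := gz_inv_ne_zero hy
  have hz' : z⁻¹ ≠ 0 := gz_inv_ne_zero hz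
  have hrx' : x⁻¹ * x⁻¹⁻¹ = u2 := by rw [GroupoidZ.inv_inv']; exact hsx
  have hsx' : x⁻¹⁻¹ * x⁻¹ = u1 := by rw [GroupoidZ.inv_inv']; exact hrx
  have hry' : y⁻¹ * y⁻¹⁻¹ = u3 := by rw [GroupoidZ.inv_inv']; exact hsy
  have hsy' : y⁻¹⁻¹ * y⁻¹ = u2 := by rw [GroupoidZ.inv_inv']; exact hry
  have hrz' : z⁻¹ * z⁻¹⁻¹ = u3 := by rw [GroupoidZ.inv_inv']; exact hsz
  have hsz' : z⁻¹⁻¹ * z⁻¹ = u1 := by rw [GroupoidZ.inv_inv']; exact hrz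
  have hox' : IsOpen ({x⁻¹} : Set G) := by
    rw [← setInv_singleton]; exact isOpen_setInv hox
  have hoy' : IsOpen ({y⁻¹} : Set G) := by
    rw [← setInv_singleton]; exact isOpen_setInv hoy
  have hoz' : IsOpen ({z⁻¹} : Set G) := by
    rw [← setInv_singleton]; exact isOpen_setInv hoz
  -- singleton COBs
  have cx := isCOB_singleton hx hox
  have cy := isCOB_singleton hy hoy
  have cz := isCOB_singleton hz hoz
  have cx' := isCOB_singleton hx' hox'
  have cy' := isCOB_singleton hy' hoy'
  have cz' := isCOB_singleton hz' hoz'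
  -- rimg/simg of singletons
  have rX : rimg ({x} : Set G) = {u1} := by rw [rimg_singleton, hrx]
  have sX : simg ({x} : Set G) = {u2} := by rw [simg_singleton, hsx]
  have rY : rimg ({y} : Set G) = {u2} := by rw [rimg_singleton, hry]
  have sY : simg ({y} : Set G) = {u3} := by rw [simg_singleton, hsy]
  have rZ : rimg ({z} : Set G) = {u1} := by rw [rimg_singleton, hrz]
  have sZ : simg ({z} : Set G) = {u3} := by rw [simg_singleton, hsz]
  have rX' : rimg ({x⁻¹} : Set G) = {u2} := by rw [rimg_singleton, hrx']
  have sX' : simg ({x⁻¹} : Set G) = {u1} := by rw [simg_singleton, hsx']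
  have rY' : rimg ({y⁻¹} : Set G) = {u3} := by rw [rimg_singleton, hry']
  have sY' : simg ({y⁻¹} : Set G) = {u2} := by rw [simg_singleton, hsy']
  have rZ' : rimg ({z⁻¹} : Set G) = {u3} := by rw [rimg_singleton, hrz']
  have sZ' : simg ({z⁻¹} : Set G) = {u1} := by rw [simg_singleton, hsz']
  -- disjointness of unit singletons
  have e12 : ({u1} : Set G) ∩ {u2} = ∅ := by
    rw [Set.eq_empty_iff_forall_notMem]; rintro w ⟨rfl, h⟩; exact h12 h
  have e13 : ({u1} : Set G) ∩ {u3} = ∅ := by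
    rw [Set.eq_empty_iff_forall_notMem]; rintro w ⟨rfl, h⟩; exact h13 h
  have e21 : ({u2} : Set G) ∩ {u1} = ∅ := by rw [Set.inter_comm]; exact e12
  have e23 : ({u2} : Set G) ∩ {u3} = ∅ := by
    rw [Set.eq_empty_iff_forall_notMem]; rintro w ⟨rfl, h⟩; exact h23 h
  have e31 : ({u3} : Set G) ∩ {u1} = ∅ := by rw [Set.inter_comm]; exact e13
  have e32 : ({u3} : Set G) ∩ {u2} = ∅ := by rw [Set.inter_comm]; exact e23
  -- non-units
  have nux : x ∉ unitSpace G := gz_not_unit_of_r_ne_s (by rw [hrx, hsx]; exact h12)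
  have nuy : y ∉ unitSpace G := gz_not_unit_of_r_ne_s (by rw [hry, hsy]; exact h23)
  have nuz : z ∉ unitSpace G := gz_not_unit_of_r_ne_s (by rw [hrz, hsz]; exact h13)
  have nux' : x⁻¹ ∉ unitSpace G := gz_not_unit_of_r_ne_s (by rw [hrx', hsx']; exact h12.symm)
  have nuy' : y⁻¹ ∉ unitSpace G := gz_not_unit_of_r_ne_s (by rw [hry', hsy']; exact h23.symm)
  have nuz' : z⁻¹ ∉ unitSpace G := gz_not_unit_of_r_ne_s (by rw [hrz', hsz']; exact h13.symm)
  -- element distinctness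
  have nxy : x ≠ y := gz_ne_of_r hrx hry h12
  have nxz : x ≠ z := gz_ne_of_s hsx hsz h23
  have nxx' : x ≠ x⁻¹ := gz_ne_of_r hrx hrx' h12
  have nxy' : x ≠ y⁻¹ := gz_ne_of_r hrx hry' h13
  have nxz' : x ≠ z⁻¹ := gz_ne_of_r hrx hrz' h13
  have nyz : y ≠ z := gz_ne_of_r hry hrz h12.symm
  have nyx' : y ≠ x⁻¹ := gz_ne_of_s hsy hsx' h13.symm
  have nyy' : y ≠ y⁻¹ := gz_ne_of_r hry hry' h23
  have nyz' : y ≠ z⁻¹ := gz_ne_of_r hry hrz' h23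
  have nzx' : z ≠ x⁻¹ := gz_ne_of_r hrz hrx' h12
  have nzy' : z ≠ y⁻¹ := gz_ne_of_r hrz hry' h13
  have nzz' : z ≠ z⁻¹ := gz_ne_of_r hrz hrz' h13
  have nx'y' : x⁻¹ ≠ y⁻¹ := gz_ne_of_r hrx' hry' h23
  have nx'z' : x⁻¹ ≠ z⁻¹ := gz_ne_of_r hrx' hrz' h23
  have ny'z' : y⁻¹ ≠ z⁻¹ := gz_ne_of_s hsy' hsz' h12.symm
  -- the six sets
  set Cs : Set G := ({x} ∪ {y}) ∪ {z⁻¹} with hCs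
  set Cs' : Set G := ({x⁻¹} ∪ {y⁻¹}) ∪ {z} with hCs'
  set T1 : Set G := {x} ∪ {x⁻¹} with hT1
  set T2 : Set G := {y} ∪ {y⁻¹} with hT2
  set T3 : Set G := {z} ∪ {z⁻¹} with hT3
  -- images of the sets
  have rCs : rimg Cs = ({u1} ∪ {u2}) ∪ {u3} := by
    rw [hCs, rimg_union, rimg_union, rX, rY, rZ']
  have sCs : simg Cs = ({u2} ∪ {u3}) ∪ {u1} := by
    rw [hCs, simg_union, simg_union, sX, sY, sZ']
  have rCs' : rimg Cs' = ({u2} ∪ {u3}) ∪ {u1} := by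
    rw [hCs', rimg_union, rimg_union, rX', rY', rZ]
  have sCs' : simg Cs' = ({u1} ∪ {u2}) ∪ {u3} := by
    rw [hCs', simg_union, simg_union, sX', sY', sZ]
  have hU123 : (({u1} : Set G) ∪ {u2}) ∪ {u3} = ({u2} ∪ {u3}) ∪ {u1} := by
    ext w; simp only [Set.mem_union, Set.mem_singleton_iff]; tauto
  have rT1 : rimg T1 = {u1} ∪ {u2} := by rw [hT1, rimg_union, rX, rX']
  have sT1 : simg T1 = {u2} ∪ {u1} := by rw [hT1, simg_union, sX, sX']
  have rT2 : rimg T2 = {u2} ∪ {u3} := by rw [hT2, rimg_union, rY, rY']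
  have sT2 : simg T2 = {u3} ∪ {u2} := by rw [hT2, simg_union, sY, sY']
  have rT3 : rimg T3 = {u1} ∪ {u3} := by rw [hT3, rimg_union, rZ, rZ']
  have sT3 : simg T3 = {u3} ∪ {u1} := by rw [hT3, simg_union, sZ, sZ']
  -- COB structures
  have cCs : IsCOB Cs := by
    refine isCOB_union (isCOB_union cx cy ?_ ?_) cz' ?_ ?_
    · rw [rX, rY]; exact e12
    · rw [sX, sY]; exact e23
    · rw [rimg_union, rX, rY, rZ', Set.union_inter_distrib_right, e13, e23, Set.union_empty]
    · rw [simg_union, sX, sY, sZ', Set.union_inter_distrib_right, e21, e31, Set.union_empty]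
  have cCs' : IsCOB Cs' := by
    refine isCOB_union (isCOB_union cx' cy' ?_ ?_) cz ?_ ?_
    · rw [rX', rY']; exact e23
    · rw [sX', sY']; exact e12
    · rw [rimg_union, rX', rY', rZ, Set.union_inter_distrib_right, e21, e31, Set.union_empty]
    · rw [simg_union, sX', sY', sZ, Set.union_inter_distrib_right, e13, e23, Set.union_empty]
  have cT1 : IsCOB T1 := by
    refine isCOB_union cx cx' ?_ ?_
    · rw [rX, rX']; exact e12
    · rw [sX, sX']; exact e21
  have cT2 : IsCOB T2 := by
    refine isCOB_union cy cy' ?_ ?_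
    · rw [rY, rY']; exact e23
    · rw [sY, sY']; exact e32
  have cT3 : IsCOB T3 := by
    refine isCOB_union cz cz' ?_ ?_
    · rw [rZ, rZ']; exact e13
    · rw [sZ, sZ']; exact e31
  have hEcob : IsCOB (∅ : Set G) := by
    refine ⟨⟨Set.notMem_empty 0, ?_, ?_⟩, isCompact_empty, isOpen_empty⟩ <;>
      (rintro w hw; exact absurd hw (Set.notMem_empty w))
  -- no units
  have gCs : ∀ w ∈ Cs, w ∉ unitSpace G := by
    intro w hw; rw [hCs] at hw
    simp only [Set.mem_union, Set.mem_singleton_iff] at hw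
    rcases hw with ((rfl | rfl) | rfl) <;> assumption
  have gCs' : ∀ w ∈ Cs', w ∉ unitSpace G := by
    intro w hw; rw [hCs'] at hw
    simp only [Set.mem_union, Set.mem_singleton_iff] at hw
    rcases hw with ((rfl | rfl) | rfl) <;> assumption
  have gT1 : ∀ w ∈ T1, w ∉ unitSpace G := by
    intro w hw; rw [hT1] at hw
    simp only [Set.mem_union, Set.mem_singleton_iff] at hw
    rcases hw with (rfl | rfl) <;> assumption
  have gT2 : ∀ w ∈ T2, w ∉ unitSpace G := by
    intro w hw; rw [hT2] at hw
    simp only [Set.mem_union, Set.mem_singleton_iff] at hw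
    rcases hw with (rfl | rfl) <;> assumption
  have gT3 : ∀ w ∈ T3, w ∉ unitSpace G := by
    intro w hw; rw [hT3] at hw
    simp only [Set.mem_union, Set.mem_singleton_iff] at hw
    rcases hw with (rfl | rfl) <;> assumption
  -- full bisections
  have mS := mkF_full hcomp cCs gCs (by rw [rCs, sCs, hU123])
  have mS' := mkF_full hcomp cCs' gCs' (by rw [rCs', sCs', hU123])
  have mT1 := mkF_full hcomp cT1 gT1 (by rw [rT1, sT1, Set.union_comm])
  have mT2 := mkF_full hcomp cT2 gT2 (by rw [rT2, sT2, Set.union_comm])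
  have mT3 := mkF_full hcomp cT3 gT3 (by rw [rT3, sT3, Set.union_comm])
  have mE := mkF_full hcomp hEcob (fun w hw => absurd hw (Set.notMem_empty w))
    (by rw [rimg_empty, simg_empty])
  -- memberships
  have hxCs : x ∈ Cs := by rw [hCs]; simp
  have hyCs : y ∈ Cs := by rw [hCs]; simp
  refine key6 mS mE mS' mT1 mT2 mT3 ?_ ?_ ?_ ?_ ?_ ?_
  · exact ne_mkF hxCs (Set.notMem_empty x) nux
  · refine ne_mkF hxCs ?_ nux
    rw [hCs']
    intro hw
    simp only [Set.mem_union, Set.mem_singleton_iff] at hw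
    rcases hw with ((h | h) | h)
    exacts [nxx' h, nxy' h, nxz h]
  · refine ne_mkF hyCs ?_ nuy
    rw [hT1]
    intro hw
    simp only [Set.mem_union, Set.mem_singleton_iff] at hw
    rcases hw with (h | h)
    exacts [nxy h.symm, nyx' h]
  · refine ne_mkF hxCs ?_ nux
    rw [hT2]
    intro hw
    simp only [Set.mem_union, Set.mem_singleton_iff] at hw
    rcases hw with (h | h)
    exacts [nxy h, nxy' h]
  · refine ne_mkF hxCs ?_ nux
    rw [hT3]
    intro hw
    simp only [Set.mem_union, Set.mem_singleton_iff] at hw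
    rcases hw with (h | h)
    exacts [nxz h, nxz' h]
  · -- the indicator identity
    rw [mkF_indic cCs.1.1 gCs, mkF_indic cCs'.1.1 gCs', mkF_indic cT1.1.1 gT1,
      mkF_indic cT2.1.1 gT2, mkF_indic cT3.1.1 gT3,
      mkF_indic hEcob.1.1 (fun w hw => absurd hw (Set.notMem_empty w)),
      rimg_empty, indic_empty, rCs, rCs', rT1, rT2, rT3]
    -- decompose indicators of unions
    have dCs : indic Cs = indic {x} + indic {y} + indic {z⁻¹} := by
      rw [hCs, indic_union ?h1, indic_union ?h2]
      case h2 => rintro w rfl h; exact nxy h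
      case h1 =>
        intro w hw h
        simp only [Set.mem_union, Set.mem_singleton_iff] at hw
        rcases hw with (rfl | rfl); exacts [nxz' h, nyz' h]
    have dCs' : indic Cs' = indic {x⁻¹} + indic {y⁻¹} + indic {z} := by
      rw [hCs', indic_union ?h1, indic_union ?h2]
      case h2 => rintro w rfl h; exact nx'y' h
      case h1 =>
        intro w hw h
        simp only [Set.mem_union, Set.mem_singleton_iff] at hw
        rcases hw with (rfl | rfl); exacts [nzx' h.symm, nzy' h.symm]
    have dT1 : indic T1 = indic {x} + indic {x⁻¹} := by
      rw [hT1, indic_union ?h1]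
      case h1 => rintro w rfl h; exact nxx' h
    have dT2 : indic T2 = indic {y} + indic {y⁻¹} := by
      rw [hT2, indic_union ?h1]
      case h1 => rintro w rfl h; exact nyy' h
    have dT3 : indic T3 = indic {z} + indic {z⁻¹} := by
      rw [hT3, indic_union ?h1]
      case h1 => rintro w rfl h; exact nzz' h
    have du1 : ∀ w : G, w ∈ ({u1} : Set G) → w ∉ ({u2} : Set G) := by
      rintro w rfl h; exact h12 h
    have du123 : indic ((({u1} : Set G) ∪ {u2}) ∪ {u3}) =
        indic {u1} + indic {u2} + indic {u3} := by
      rw [indic_union ?h1, indic_union du1]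
      case h1 =>
        intro w hw h
        simp only [Set.mem_union, Set.mem_singleton_iff] at hw
        rcases hw with (rfl | rfl); exacts [h13 h, h23 h]
    have du231 : indic ((({u2} : Set G) ∪ {u3}) ∪ {u1}) =
        indic {u2} + indic {u3} + indic {u1} := by
      rw [indic_union ?h1, indic_union ?h2]
      case h2 => rintro w rfl h; exact h23 h
      case h1 =>
        intro w hw h
        simp only [Set.mem_union, Set.mem_singleton_iff] at hw
        rcases hw with (rfl | rfl); exacts [h12 h.symm, h13 h.symm]
    have du12 : indic (({u1} : Set G) ∪ {u2}) = indic {u1} + indic {u2} :=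
      indic_union du1
    have du23 : indic (({u2} : Set G) ∪ {u3}) = indic {u2} + indic {u3} := by
      rw [indic_union ?h1]
      case h1 => rintro w rfl h; exact h23 h
    have du13 : indic (({u1} : Set G) ∪ {u3}) = indic {u1} + indic {u3} := by
      rw [indic_union ?h1]
      case h1 => rintro w rfl h; exact h13 h
    rw [dCs, dCs', dT1, dT2, dT3, du123, du231, du12, du23, du13]
    abel

end S3sec
section Helpers

variable {G : Type*} [TopologicalSpace G] [AmpleGroupoid G]

lemma symm_cob {A : Set G} (hA : IsCOB A) (hAG : ∀ x ∈ A, x ∉ unitSpace G)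
    (hrs : rimg A ∩ simg A = ∅) :
    IsCOB (A ∪ setInv A) ∧ (∀ x ∈ A ∪ setInv A, x ∉ unitSpace G) ∧
      rimg (A ∪ setInv A) = simg (A ∪ setInv A) ∧
      rimg (A ∪ setInv A) = rimg A ∪ simg A := by
  have hsr : simg A ∩ rimg A = ∅ := by rw [Set.inter_comm]; exact hrs
  refine ⟨?_, ?_, ?_, ?_⟩
  · refine isCOB_union hA (isCOB_setInv hA) ?_ ?_
    · rw [rimg_setInv]; exact hrs
    · rw [simg_setInv]; exact hsr
  · rintro x (hx | hx)
    exacts [hAG x hx, setInv_no_units hAG x hx]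
  · rw [rimg_union, simg_union, rimg_setInv, simg_setInv, Set.union_comm]
  · rw [rimg_union, rimg_setInv]

lemma ML1sing (hcomp : IsCompact (unitSpace G)) {p q u v : G} (hp0 : p ≠ 0) (hq0 : q ≠ 0)
    (hpq : p ≠ q) (hrp : p * p⁻¹ = u) (hsp : p⁻¹ * p = v)
    (hrq : q * q⁻¹ = u) (hsq : q⁻¹ * q = v) (huv : u ≠ v)
    (hop : IsOpen ({p} : Set G)) (hoq : IsOpen ({q} : Set G)) :
    ¬ LinearIndependent ℂ
      (fun W : {W : Set G // W ∈ fullBisections G} => indic W.1) := by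
  have hpnu : p ∉ unitSpace G := gz_not_unit_of_r_ne_s (by rw [hrp, hsp]; exact huv)
  have hqnu : q ∉ unitSpace G := gz_not_unit_of_r_ne_s (by rw [hrq, hsq]; exact huv)
  refine ML1 hcomp (isCOB_singleton hp0 hop) (isCOB_singleton hq0 hoq)
    ?_ ?_ ?_ ?_ ?_ ?_ ⟨p, rfl⟩
  · rintro x rfl; exact hpnu
  · rintro x rfl; exact hqnu
  · rw [rimg_singleton, rimg_singleton, hrp, hrq]
  · rw [simg_singleton, simg_singleton, hsp, hsq]
  · rw [rimg_singleton, simg_singleton, hrp, hsp, Set.eq_empty_iff_forall_notMem]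
    rintro w ⟨rfl, h⟩
    exact huv h
  · rintro x rfl h
    exact hpq h

lemma sepML3 (hcomp : IsCompact (unitSpace G)) {γ b : G} (hγ0 : γ ≠ 0) (hb0 : b ≠ 0)
    (hγopen : IsOpen ({γ} : Set G)) (h12 : γ * γ⁻¹ ≠ γ⁻¹ * γ)
    (hbns : b * b⁻¹ ≠ b⁻¹ * b)
    (hb1 : b * b⁻¹ ≠ γ * γ⁻¹) (hb2 : b * b⁻¹ ≠ γ⁻¹ * γ)
    (hb3 : b⁻¹ * b ≠ γ * γ⁻¹) (hb4 : b⁻¹ * b ≠ γ⁻¹ * γ) :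
    ¬ LinearIndependent ℂ
      (fun W : {W : Set G // W ∈ fullBisections G} => indic W.1) := by
  have hγnu : γ ∉ unitSpace G := gz_not_unit_of_r_ne_s h12
  have hbnu : b ∉ unitSpace G := gz_not_unit_of_r_ne_s hbns
  -- symmetrize {γ}
  have hγG : ∀ x ∈ ({γ} : Set G), x ∉ unitSpace G := by rintro x rfl; exact hγnu
  have hγrs : rimg ({γ} : Set G) ∩ simg ({γ} : Set G) = ∅ := by
    rw [rimg_singleton, simg_singleton, Set.eq_empty_iff_forall_notMem]
    rintro w ⟨rfl, h⟩
    exact h12 h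
  obtain ⟨cA, gA, sA, iA⟩ := symm_cob (isCOB_singleton hγ0 hγopen) hγG hγrs
  -- a small bisection around b with controlled images
  obtain ⟨O1, O2, hO1, hO2, hbO1, hbO2, hdO⟩ := t2_separation hbns
  have hclosed : IsClosed (({γ * γ⁻¹} : Set G) ∪ {γ⁻¹ * γ}) :=
    isClosed_singleton.union isClosed_singleton
  set V : Set G := O1 ∩ (({γ * γ⁻¹} : Set G) ∪ {γ⁻¹ * γ})ᶜ with hVdef
  set W : Set G := O2 ∩ (({γ * γ⁻¹} : Set G) ∪ {γ⁻¹ * γ})ᶜ with hWdef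
  have hbV : b * b⁻¹ ∈ V := by
    refine ⟨hbO1, ?_⟩
    rintro (h | h)
    exacts [hb1 h, hb2 h]
  have hbW : b⁻¹ * b ∈ W := by
    refine ⟨hbO2, ?_⟩
    rintro (h | h)
    exacts [hb3 h, hb4 h]
  obtain ⟨B₁, hB₁, hbB₁, hB₁sub, hB₁r, hB₁s⟩ := cob_nhds hb0
    (AmpleGroupoid.isClosed_unitSpace'.isOpen_compl) hbnu
    (hO1.inter hclosed.isOpen_compl) hbV (hO2.inter hclosed.isOpen_compl) hbW
  have hB₁G : ∀ x ∈ B₁, x ∉ unitSpace G := fun x hx => hB₁sub hx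
  have hB₁rs : rimg B₁ ∩ simg B₁ = ∅ := by
    rw [Set.eq_empty_iff_forall_notMem]
    rintro w ⟨h1, h2⟩
    exact Set.disjoint_left.1 hdO (hB₁r h1).1 (hB₁s h2).1
  obtain ⟨cB, gB, sB, iB⟩ := symm_cob hB₁ hB₁G hB₁rs
  refine ML3 hcomp cA cB gA gB sA sB ?_ ⟨γ, Or.inl rfl⟩ ⟨b, Or.inl hbB₁⟩
  rw [iA, iB, rimg_singleton, simg_singleton, Set.eq_empty_iff_forall_notMem]
  rintro w ⟨hw1, hw2⟩
  have hw2' : w ∈ (({γ * γ⁻¹} : Set G) ∪ {γ⁻¹ * γ})ᶜ := by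
    rcases hw2 with h | h
    exacts [(hB₁r h).2, (hB₁s h).2]
  exact hw2' hw1

end Helpers

/-- If `G ≠ Iso(G)` and `G` has at least three non-unit elements, then the
representation `π : ℂF(G) → A(G)`, `δ_U ↦ 1_U`, is not injective; equivalently, the family
of indicator functions of full compact open bisections is linearly dependent. -/
theorem rep_not_injective_of_not_allIso {G : Type*} [TopologicalSpace G] [AmpleGroupoid G]
    (hcomp : IsCompact (unitSpace G))
    (hniso : ∃ a : G, a ≠ 0 ∧ a * a⁻¹ ≠ a⁻¹ * a)
    (hthree : ∃ a b c : G, a ≠ 0 ∧ b ≠ 0 ∧ c ≠ 0 ∧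
      a ∉ unitSpace G ∧ b ∉ unitSpace G ∧ c ∉ unitSpace G ∧ a ≠ b ∧ a ≠ c ∧ b ≠ c) :
    ¬ LinearIndependent ℂ
        (fun B : {B : Set G // B ∈ fullBisections G} => indic B.1) := by
  obtain ⟨γ, hγ0, h12⟩ := hniso
  have hγ0' : γ⁻¹ ≠ 0 := gz_inv_ne_zero hγ0
  have hu1 : γ * γ⁻¹ ∈ unitSpace G := gz_r_mem_unit hγ0
  have hu2 : γ⁻¹ * γ ∈ unitSpace G := gz_s_mem_unit hγ0
  have hγnu : γ ∉ unitSpace G := gz_not_unit_of_r_ne_s h12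
  have hγnu' : γ⁻¹ ∉ unitSpace G := by
    intro h
    have := gz_unit_inv h
    rw [GroupoidZ.inv_inv'] at this
    exact hγnu (this ▸ h)
  -- an initial bisection around γ with separated range and source
  obtain ⟨Vr, Vs, hVr, hVs, hmr, hms, hVd⟩ := t2_separation h12
  obtain ⟨A₀, hA₀, hγA₀, hA₀sub, hA₀r, hA₀s⟩ := cob_nhds hγ0
    (AmpleGroupoid.isClosed_unitSpace'.isOpen_compl) hγnu hVr hmr hVs hms
  have hA₀G : ∀ x ∈ A₀, x ∉ unitSpace G := fun x hx => hA₀sub hx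
  have hA₀rs : rimg A₀ ∩ simg A₀ = ∅ := by
    rw [Set.eq_empty_iff_forall_notMem]
    rintro w ⟨h1, h2⟩
    exact Set.disjoint_left.1 hVd (hA₀r h1) (hA₀s h2)
  by_cases hsplit : ∃ A₁ : Set G, IsCOB A₁ ∧ A₁ ⊆ A₀ ∧ A₁.Nonempty ∧ (A₀ \ A₁).Nonempty
  · -- case: A₀ splits into two pieces; use ML3
    obtain ⟨A₁, hA₁, hA₁sub, hA₁ne, hA₂ne⟩ := hsplit
    set A₂ : Set G := A₀ \ A₁ with hA₂def
    have hA₂sub : A₂ ⊆ A₀ := Set.diff_subset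
    have hA₂ : IsCOB A₂ := by
      refine ⟨isBisection_subset hA₀.1 hA₂sub, hA₀.2.1.diff hA₁.2.2, hA₀.2.2.sdiff ?_⟩
      exact hA₁.2.1.isClosed
    have hA₁rs : rimg A₁ ∩ simg A₁ = ∅ := by
      rw [Set.eq_empty_iff_forall_notMem]
      rintro w ⟨h1, h2⟩
      rw [Set.eq_empty_iff_forall_notMem] at hA₀rs
      refine hA₀rs w ⟨?_, ?_⟩
      · obtain ⟨x, hx, rfl⟩ := h1; exact ⟨x, hA₁sub hx, rfl⟩
      · obtain ⟨x, hx, rfl⟩ := h2; exact ⟨x, hA₁sub hx, rfl⟩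
    have hA₂rs : rimg A₂ ∩ simg A₂ = ∅ := by
      rw [Set.eq_empty_iff_forall_notMem]
      rintro w ⟨h1, h2⟩
      rw [Set.eq_empty_iff_forall_notMem] at hA₀rs
      refine hA₀rs w ⟨?_, ?_⟩
      · obtain ⟨x, hx, rfl⟩ := h1; exact ⟨x, hA₂sub hx, rfl⟩
      · obtain ⟨x, hx, rfl⟩ := h2; exact ⟨x, hA₂sub hx, rfl⟩
    obtain ⟨cA, gA, sA, iA⟩ := symm_cob hA₁ (fun x hx => hA₀G x (hA₁sub hx)) hA₁rs
    obtain ⟨cB, gB, sB, iB⟩ := symm_cob hA₂ (fun x hx => hA₀G x (hA₂sub hx)) hA₂rs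
    obtain ⟨a1, ha1⟩ := hA₁ne
    obtain ⟨a2, ha2⟩ := hA₂ne
    refine ML3 hcomp cA cB gA gB sA sB ?_ ⟨a1, Or.inl ha1⟩ ⟨a2, Or.inl ha2⟩
    rw [iA, iB, Set.eq_empty_iff_forall_notMem]
    rw [Set.eq_empty_iff_forall_notMem] at hA₀rs
    rintro w ⟨hw1, hw2⟩
    rcases hw1 with h1 | h1 <;> rcases hw2 with h2 | h2
    · -- both ranges: range injectivity on A₀
      obtain ⟨x, hx, rfl⟩ := h1
      obtain ⟨y, hy, hxy⟩ := h2
      have : y = x := hA₀.1.2.1 y (hA₂sub hy) x (hA₁sub hx) hxy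
      exact hy.2 (this ▸ hx)
    · obtain ⟨x, hx, rfl⟩ := h1
      obtain ⟨y, hy, hxy⟩ := h2
      exact hA₀rs (x * x⁻¹) ⟨⟨x, hA₁sub hx, rfl⟩, ⟨y, hA₂sub hy, hxy⟩⟩
    · obtain ⟨x, hx, rfl⟩ := h1
      obtain ⟨y, hy, hxy⟩ := h2
      exact hA₀rs (x⁻¹ * x) ⟨⟨y, hA₂sub hy, hxy⟩, ⟨x, hA₁sub hx, rfl⟩⟩
    · -- both sources: source injectivity on A₀
      obtain ⟨x, hx, rfl⟩ := h1
      obtain ⟨y, hy, hxy⟩ := h2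
      have : y = x := hA₀.1.2.2 y (hA₂sub hy) x (hA₁sub hx) hxy
      exact hy.2 (this ▸ hx)
  · -- case: A₀ = {γ}
    have hA₀sing : A₀ = {γ} := by
      refine Set.eq_singleton_iff_unique_mem.2 ⟨hγA₀, ?_⟩
      intro x hxA₀
      by_contra hxγ
      obtain ⟨Uγ, Ux, hUγ, hUx, hγU, hxU, hdU⟩ := t2_separation (Ne.symm hxγ)
      obtain ⟨B, hB, hγB, hBsub⟩ := AmpleGroupoid.ample_basis' γ (A₀ ∩ Uγ) hγ0
        (hA₀.2.2.inter hUγ) ⟨hγA₀, hγU⟩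
      exact hsplit ⟨B, hB, fun w hw => (hBsub hw).1, ⟨γ, hγB⟩,
        ⟨x, hxA₀, fun hxB => Set.disjoint_left.1 hdU (hBsub hxB).2 hxU⟩⟩
    have hγopen : IsOpen ({γ} : Set G) := hA₀sing ▸ hA₀.2.2
    have hu1open : IsOpen ({γ * γ⁻¹} : Set G) := by
      rw [← rimg_singleton]
      exact isOpen_rimg hγopen (fun h => hγ0 (Set.mem_singleton_iff.1 h).symm)
    have hu2open : IsOpen ({γ⁻¹ * γ} : Set G) := by
      rw [← simg_singleton]
      exact isOpen_simg hγopen (fun h => hγ0 (Set.mem_singleton_iff.1 h).symm)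
    -- isolation of arrows with range γγ⁻¹ or γ⁻¹γ
    have isoR : ∀ w : G, w ≠ 0 → (w * w⁻¹ = γ * γ⁻¹ ∨ w * w⁻¹ = γ⁻¹ * γ) →
        IsOpen ({w} : Set G) := by
      intro w hw0 hwr
      obtain ⟨D, hD, hwD⟩ := exists_cob hw0
      refine isolated_of_cob hD hwD ?_
      rcases hwr with h | h <;> rw [h]
      exacts [hu1open, hu2open]
    -- a third element c ∉ {γ, γ⁻¹}
    obtain ⟨c, hc0, hcnu, hcγ, hcγ'⟩ :
        ∃ c : G, c ≠ 0 ∧ c ∉ unitSpace G ∧ c ≠ γ ∧ c ≠ γ⁻¹ := by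
      obtain ⟨a, b, c, ha0, hb0, hc0, hanu, hbnu, hcnu, hab, hac, hbc⟩ := hthree
      by_cases ha : a = γ ∨ a = γ⁻¹
      · by_cases hb : b = γ ∨ b = γ⁻¹
        · rcases ha with ha1 | ha1 <;> rcases hb with hb1 | hb1
          · exact absurd (ha1.trans hb1.symm) hab
          · exact ⟨c, hc0, hcnu, fun h => hac (ha1.trans h.symm),
              fun h => hbc (hb1.trans h.symm)⟩
          · exact ⟨c, hc0, hcnu, fun h => hbc (hb1.trans h.symm),
              fun h => hac (ha1.trans h.symm)⟩
          · exact absurd (ha1.trans hb1.symm) hab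
        · push_neg at hb
          exact ⟨b, hb0, hbnu, hb.1, hb.2⟩
      · push_neg at ha
        exact ⟨a, ha0, hanu, ha.1, ha.2⟩
    have hc0' : c⁻¹ ≠ 0 := gz_inv_ne_zero hc0
    have hrci : c⁻¹ * c⁻¹⁻¹ = c⁻¹ * c := by rw [GroupoidZ.inv_inv']
    have hsci : c⁻¹⁻¹ * c⁻¹ = c * c⁻¹ := by rw [GroupoidZ.inv_inv']
    by_cases hciso : c * c⁻¹ = c⁻¹ * c
    · -- c is an isotropy element
      by_cases hv1 : c * c⁻¹ = γ⁻¹ * γ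
      · -- δ = γ * c
        have hδ0 : γ * c ≠ 0 := gz_mul_ne_zero hγ0 hc0 hv1.symm
        have hrδ : (γ * c) * (γ * c)⁻¹ = γ * γ⁻¹ := gz_r_mul hγ0 hc0 hδ0
        have hsδ : (γ * c)⁻¹ * (γ * c) = γ⁻¹ * γ := by
          rw [gz_s_mul hγ0 hc0 hδ0, ← hciso, hv1]
        have hδγ : γ * c ≠ γ := by
          intro h
          have e1 : (γ⁻¹ * γ) * c = γ⁻¹ * γ := by
            rw [GroupoidZ.mul_assoc' γ⁻¹ γ c (gz_s_ne_zero hγ0) hδ0, h]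
          have e2 : (γ⁻¹ * γ) * c = c := by
            rw [← hv1, GroupoidZ.mul_inv_self_mul']
          exact hcnu ((e2.symm.trans e1) ▸ hu2)
        refine ML1sing hcomp hγ0 hδ0 (Ne.symm hδγ) rfl rfl hrδ hsδ h12 hγopen ?_
        exact isoR _ hδ0 (Or.inl hrδ)
      · by_cases hv2 : c * c⁻¹ = γ * γ⁻¹
        · -- δ = c * γ
          have hδ0 : c * γ ≠ 0 := gz_mul_ne_zero hc0 hγ0 (hciso.symm.trans hv2)
          have hrδ : (c * γ) * (c * γ)⁻¹ = γ * γ⁻¹ := by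
            rw [gz_r_mul hc0 hγ0 hδ0, hv2]
          have hsδ : (c * γ)⁻¹ * (c * γ) = γ⁻¹ * γ := gz_s_mul hc0 hγ0 hδ0
          have hδγ : c * γ ≠ γ := by
            intro h
            have e1 : c * (γ * γ⁻¹) = γ * γ⁻¹ := by
              rw [← GroupoidZ.mul_assoc' c γ γ⁻¹ hδ0 (gz_r_ne_zero hγ0), h]
            have e2 : c * (γ * γ⁻¹) = c := by
              rw [← hv2, hciso, gz_mul_s_self]
            exact hcnu ((e2.symm.trans e1) ▸ hu1)
          refine ML1sing hcomp hγ0 hδ0 (Ne.symm hδγ) rfl rfl hrδ hsδ h12 hγopen ?_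
          exact isoR _ hδ0 (Or.inl hrδ)
        · -- the unit of c avoids both γγ⁻¹ and γ⁻¹γ
          have hclosed : IsClosed (({γ * γ⁻¹} : Set G) ∪ {γ⁻¹ * γ}) :=
            isClosed_singleton.union isClosed_singleton
          have hcV : c * c⁻¹ ∈ (({γ * γ⁻¹} : Set G) ∪ {γ⁻¹ * γ})ᶜ := by
            rintro (h | h)
            exacts [hv2 h, hv1 h]
          have hcW : c⁻¹ * c ∈ (({γ * γ⁻¹} : Set G) ∪ {γ⁻¹ * γ})ᶜ := by
            rw [← hciso]; exact hcV
          obtain ⟨B₀, hB₀, hcB₀, hB₀sub, hB₀r, hB₀s⟩ := cob_nhds hc0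
            (AmpleGroupoid.isClosed_unitSpace'.isOpen_compl) hcnu
            hclosed.isOpen_compl hcV hclosed.isOpen_compl hcW
          have hB₀G : ∀ x ∈ B₀, x ∉ unitSpace G := fun x hx => hB₀sub hx
          by_cases hiso₀ : ∀ w ∈ B₀, w * w⁻¹ = w⁻¹ * w
          · -- B₀ is symmetric already: ML3 with {γ} ∪ {γ⁻¹} and B₀
            have hγG : ∀ x ∈ ({γ} : Set G), x ∉ unitSpace G := by rintro x rfl; exact hγnu
            have hγrs : rimg ({γ} : Set G) ∩ simg ({γ} : Set G) = ∅ := by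
              rw [rimg_singleton, simg_singleton, Set.eq_empty_iff_forall_notMem]
              rintro w ⟨rfl, h⟩
              exact h12 h
            obtain ⟨cA, gA, sA, iA⟩ := symm_cob (isCOB_singleton hγ0 hγopen) hγG hγrs
            have sB : rimg B₀ = simg B₀ := by
              ext w
              constructor
              · rintro ⟨p, hp, rfl⟩
                exact ⟨p, hp, (hiso₀ p hp).symm⟩
              · rintro ⟨p, hp, rfl⟩
                exact ⟨p, hp, hiso₀ p hp⟩
            refine ML3 hcomp cA hB₀ gA hB₀G sA sB ?_ ⟨γ, Or.inl rfl⟩ ⟨c, hcB₀⟩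
            rw [iA, rimg_singleton, simg_singleton, Set.eq_empty_iff_forall_notMem]
            rintro w ⟨hw1, hw2⟩
            exact (hB₀r hw2) hw1
          · push_neg at hiso₀
            obtain ⟨b, hbB₀, hbns⟩ := hiso₀
            have hb0 : b ≠ 0 := fun h => hB₀.1.1 (h ▸ hbB₀)
            refine sepML3 hcomp hγ0 hb0 hγopen h12 hbns ?_ ?_ ?_ ?_
            · exact fun h => (hB₀r ⟨b, hbB₀, rfl⟩) (Or.inl h)
            · exact fun h => (hB₀r ⟨b, hbB₀, rfl⟩) (Or.inr h)
            · exact fun h => (hB₀s ⟨b, hbB₀, rfl⟩) (Or.inl h)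
            · exact fun h => (hB₀s ⟨b, hbB₀, rfl⟩) (Or.inr h)
    · -- c is not isotropy: full case analysis
      by_cases h11 : c * c⁻¹ = γ * γ⁻¹
      · by_cases h22 : c⁻¹ * c = γ⁻¹ * γ
        · -- same range and source as γ
          exact ML1sing hcomp hγ0 hc0 (Ne.symm hcγ) rfl rfl h11 h22 h12 hγopen
            (isoR c hc0 (Or.inl h11))
        · -- triangle with u3 = c⁻¹ * c
          have h13' : γ * γ⁻¹ ≠ c⁻¹ * c := fun h => hciso (h11.trans h)
          have hy0 : γ⁻¹ * c ≠ 0 := gz_mul_ne_zero hγ0' hc0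
            (by rw [GroupoidZ.inv_inv']; exact h11.symm)
          have hry : (γ⁻¹ * c) * (γ⁻¹ * c)⁻¹ = γ⁻¹ * γ := by
            have := gz_r_mul hγ0' hc0 hy0
            rwa [GroupoidZ.inv_inv'] at this
          have hsy : (γ⁻¹ * c)⁻¹ * (γ⁻¹ * c) = c⁻¹ * c := gz_s_mul hγ0' hc0 hy0
          exact S3rel hcomp hγ0 hy0 hc0 rfl rfl hry hsy h11 rfl h12 h13' (Ne.symm h22)
            hγopen (isoR _ hy0 (Or.inr hry)) (isoR c hc0 (Or.inl h11))
      · by_cases h21 : c⁻¹ * c = γ * γ⁻¹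
        · by_cases h12' : c * c⁻¹ = γ⁻¹ * γ
          · -- c⁻¹ has the same range and source as γ
            have hcinvγ : γ ≠ c⁻¹ := by
              intro h
              apply hcγ'
              rw [h, GroupoidZ.inv_inv']
            exact ML1sing hcomp hγ0 hc0' hcinvγ rfl rfl (hrci.trans h21)
              (hsci.trans h12') h12 hγopen (isoR c⁻¹ hc0' (Or.inl (hrci.trans h21)))
          · -- triangle with u3 = c * c⁻¹
            have hy0 : γ⁻¹ * c⁻¹ ≠ 0 := gz_mul_ne_zero hγ0' hc0'
              (by rw [GroupoidZ.inv_inv', hrci]; exact h21.symm)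
            have hry : (γ⁻¹ * c⁻¹) * (γ⁻¹ * c⁻¹)⁻¹ = γ⁻¹ * γ := by
              have := gz_r_mul hγ0' hc0' hy0
              rwa [GroupoidZ.inv_inv'] at this
            have hsy : (γ⁻¹ * c⁻¹)⁻¹ * (γ⁻¹ * c⁻¹) = c * c⁻¹ := by
              have := gz_s_mul hγ0' hc0' hy0
              rwa [hsci] at this
            exact S3rel hcomp hγ0 hy0 hc0' rfl rfl hry hsy (hrci.trans h21) hsci h12
              (Ne.symm h11) (Ne.symm h12') hγopen (isoR _ hy0 (Or.inr hry))
              (isoR c⁻¹ hc0' (Or.inl (hrci.trans h21)))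
        · by_cases h12' : c * c⁻¹ = γ⁻¹ * γ
          · -- triangle with u3 = c⁻¹ * c, z = γ * c
            have h23' : γ⁻¹ * γ ≠ c⁻¹ * c := fun h => hciso (h12'.trans h)
            have hz0 : γ * c ≠ 0 := gz_mul_ne_zero hγ0 hc0 h12'.symm
            have hrz : (γ * c) * (γ * c)⁻¹ = γ * γ⁻¹ := gz_r_mul hγ0 hc0 hz0
            have hsz : (γ * c)⁻¹ * (γ * c) = c⁻¹ * c := gz_s_mul hγ0 hc0 hz0
            exact S3rel hcomp hγ0 hc0 hz0 rfl rfl h12' rfl hrz hsz h12 (Ne.symm h21)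
              h23' hγopen (isoR c hc0 (Or.inr h12')) (isoR _ hz0 (Or.inl hrz))
          · by_cases h22 : c⁻¹ * c = γ⁻¹ * γ
            · -- triangle with u3 = c * c⁻¹, y = c⁻¹, z = γ * c⁻¹
              have hz0 : γ * c⁻¹ ≠ 0 := gz_mul_ne_zero hγ0 hc0'
                (by rw [hrci]; exact h22.symm)
              have hrz : (γ * c⁻¹) * (γ * c⁻¹)⁻¹ = γ * γ⁻¹ := gz_r_mul hγ0 hc0' hz0
              have hsz : (γ * c⁻¹)⁻¹ * (γ * c⁻¹) = c * c⁻¹ := by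
                have := gz_s_mul hγ0 hc0' hz0
                rwa [hsci] at this
              exact S3rel hcomp hγ0 hc0' hz0 rfl rfl (hrci.trans h22) hsci hrz hsz h12
                (Ne.symm h11) (Ne.symm h12') hγopen
                (isoR c⁻¹ hc0' (Or.inr (hrci.trans h22))) (isoR _ hz0 (Or.inl hrz))
            · -- units of c avoid those of γ entirely
              exact sepML3 hcomp hγ0 hc0 hγopen h12 hciso h11 h12' h21 h22
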